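/- arXiv:1609.04618 — 8 statements merged into one kernel-verified Lean document; each statement's English description precedes it below -/
import Mathlib

section
/- Let t0, t1 be two strings with distinct unique end-of-string symbols, and suppose suffixes t0[p, n0] and t1[q, n1] with p < n0 and q < n1 satisfy t0[p] = t1[q]. Then for any h ≥ 1, t0[p, p+h-1] ⪯ t1[q, q+h-1] if and only if t0[p+1, p+h-1] ⪯ t1[q+1, q+h-1], where substrings are truncated at the string end. -/
/-- `t0` and `t1` end with distinct unique end-of-string symbols `$0 < $1`,
each strictly smaller than all other symbols occurring in either string. -/
def DistinctEndMarkers {α : Type*} [LinearOrder α] (t0 t1 : List α) : Prop :=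
  ∃ (h0 : t0 ≠ []) (h1 : t1 ≠ []),
    t0.getLast h0 < t1.getLast h1 ∧
    (∀ c ∈ t0 ++ t1, c ≠ t0.getLast h0 → c ≠ t1.getLast h1 → t1.getLast h1 < c) ∧
    (∀ i (hi : i < t0.length - 1), t0[i]'(by omega) ≠ t0.getLast h0) ∧
    (∀ i (hi : i < t1.length - 1), t1[i]'(by omega) ≠ t1.getLast h1) ∧
    t0.getLast h0 ∉ t1 ∧ t1.getLast h1 ∉ t0

lemma cons_le_cons_iff' {α : Type*} [LinearOrder α] (a : α) (l l' : List α) :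
    (a :: l) ≤ (a :: l') ↔ l ≤ l' := by
  constructor
  · intro hle
    rw [← not_lt] at hle ⊢
    intro hlt; exact hle (List.Lex.cons hlt)
  · exact List.cons_le_cons a

/-- if suffixes `t0[p,n0]` and `t1[q,n1]` with `p < n0` and `q < n1`
(1-based; here 0-based `p + 1 < |t0|`, `q + 1 < |t1|`) start with the same symbol,
then for any `h ≥ 1` the depth-`h` truncated comparison of the two suffixes holds iff
the depth-`(h-1)` truncated comparison of the suffixes shifted by one holds.
(`(t.drop p).take h` is `t[p, p+h-1]`, truncated at the string end.) -/
theorem truncated_comparison_inductive_step {α : Type*} [LinearOrder α] (t0 t1 : List α)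
    (hend : DistinctEndMarkers t0 t1)
    (p q : ℕ) (hp : p + 1 < t0.length) (hq : q + 1 < t1.length)
    (heq : t0[p]'(by omega) = t1[q]'(by omega))
    (h : ℕ) (hh : 1 ≤ h) :
    (t0.drop p).take h ≤ (t1.drop q).take h ↔
      (t0.drop (p + 1)).take (h - 1) ≤ (t1.drop (q + 1)).take (h - 1) := by
  obtain ⟨h', rfl⟩ : ∃ h', h = h' + 1 := ⟨h - 1, by omega⟩
  rw [List.drop_eq_getElem_cons (by omega : p < t0.length),
      List.drop_eq_getElem_cons (by omega : q < t1.length),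
      List.take_succ_cons, List.take_succ_cons, heq]
  simpa using cons_le_cons_iff' _ _ _
end

section
/- Let t0, t1 be strings of lengths n0, n1 with distinct unique end-of-string symbols, and let h ≥ max_lcp + 1 where max_lcp is the maximum over all pairs (i,j) of LCP(t0[i,n0], t1[j,n1]). Then for all suffix positions p of t0 and q of t1, t0[p,p+h-1] ⪯ t1[q,q+h-1] if and only if t0[p,n0] ⪯ t1[q,n1]. In other words, comparing suffixes truncated to depth h agrees with full lexicographic comparison of suffixes. -/
/-- Length of the longest common prefix of two lists. -/
def lcp {α : Type*} [DecidableEq α] : List α → List α → ℕ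
  | a :: x, b :: y => if a = b then lcp x y + 1 else 0
  | _, _ => 0

theorem take_le_take_iff_of_lcp_lt {α : Type*} [LinearOrder α] {x y : List α} {h : ℕ}
    (hlt : lcp x y < h) : x.take h ≤ y.take h ↔ x ≤ y := by
  -- Mathlib's `≤` on lists is `< ∨ =`, not core's `List.le`, so we argue through `<`.
  induction x generalizing y h with
  | nil => simp [← not_lt]
  | cons a x ih =>
    obtain _ | h := h
    · omega
    cases y with
    | nil => simp [← not_lt]
    | cons b y =>
      by_cases hab : a = b
      · subst hab
        simp only [lcp, if_true, Nat.add_lt_add_iff_right] at hlt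
        simpa [← not_lt, List.cons_lt_cons_iff] using ih hlt
      · simp [← not_lt, List.cons_lt_cons_iff, Ne.symm hab]

theorem truncated_comparison_beyond_maxlcp_general {α : Type*} [LinearOrder α] (t0 t1 : List α)
    (h : ℕ)
    (hmax : ∀ p < t0.length, ∀ q < t1.length, lcp (t0.drop p) (t1.drop q) < h) :
    ∀ p < t0.length, ∀ q < t1.length,
      ((t0.drop p).take h ≤ (t1.drop q).take h ↔ t0.drop p ≤ t1.drop q) :=
  fun p hp q hq => take_le_take_iff_of_lcp_lt (hmax p hp q hq)

/-- if `h` exceeds the maximum LCP between any suffix of `t0` and any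
suffix of `t1`, then comparing suffixes truncated at depth `h` agrees with the full
lexicographic comparison of the suffixes. (0-based positions `p, q`.) -/
theorem truncated_comparison_beyond_maxlcp {α : Type*} [LinearOrder α] (t0 t1 : List α)
    (hend : DistinctEndMarkers t0 t1)
    (h : ℕ)
    (hmax : ∀ p < t0.length, ∀ q < t1.length, lcp (t0.drop p) (t1.drop q) < h) :
    ∀ p < t0.length, ∀ q < t1.length,
      ((t0.drop p).take h ≤ (t1.drop q).take h ↔ t0.drop p ≤ t1.drop q) :=
  truncated_comparison_beyond_maxlcp_general t0 t1 h hmax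
end

section
/- Let t be a string with pairwise distinct suffixes, SA its suffix array and LCP its lcp array (with sentinel values LCP[1] = LCP[n+1] = -1). Fix h ≥ 0 and indices ℓ ≤ m with LCP[ℓ] < h, LCP[m+1] < h, and LCP[i] ≥ h for all ℓ < i ≤ m. Then the suffixes t[SA[ℓ],n], …, t[SA[m],n] all share the same length-min(h, |suffix|) prefix, namely they are exactly the suffixes of t whose length-h truncation equals t[SA[ℓ], SA[ℓ]+h-1]. -/
/-- The LCP array of `t` relative to the suffix array `sa`, with sentinel value `-1`
at position `0` and at positions `≥ t.length` (0-based indexing). -/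
def LCParr {α : Type*} [LinearOrder α] (t : List α) (sa : ℕ → ℕ) : ℕ → ℤ := fun i =>
  if i = 0 ∨ t.length ≤ i then -1
  else (lcp (t.drop (sa (i - 1))) (t.drop (sa i)) : ℤ)

/-- `[ℓ, m]` is an `h`-block for the (sentinel-extended) LCP array `L` of a string of
length `n`: the boundary LCP values are `< h` and all interior values are `≥ h`. -/
def IsBlock (L : ℕ → ℤ) (n : ℕ) (h ℓ m : ℕ) : Prop :=
  ℓ ≤ m ∧ m < n ∧ L ℓ < h ∧ L (m + 1) < h ∧ ∀ i, ℓ < i → i ≤ m → (h : ℤ) ≤ L i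

section Aux
variable {α : Type*} [DecidableEq α]


lemma lcp_nil_left (y : List α) : lcp [] y = 0 := by cases y <;> rfl
lemma lcp_nil_right (x : List α) : lcp x [] = 0 := by cases x <;> rfl
lemma lcp_cons (a b : α) (x y : List α) :
    lcp (a::x) (b::y) = if a = b then lcp x y + 1 else 0 := rfl

lemma lcp_comm : ∀ x y : List α, lcp x y = lcp y x
  | [], y => by rw [lcp_nil_left, lcp_nil_right]
  | a::x, [] => by rw [lcp_nil_left, lcp_nil_right]
  | a::x, b::y => by
      rw [lcp_cons, lcp_cons, lcp_comm x y]
      by_cases hab : a = b <;> simp [hab, Ne.symm, eq_comm]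

lemma take_eq_of_le_lcp : ∀ {x y : List α} {h : ℕ}, h ≤ lcp x y → x.take h = y.take h
  | [], y, h, hh => by
      rw [lcp_nil_left, Nat.le_zero] at hh; subst hh; simp
  | a::x, [], h, hh => by
      rw [lcp_nil_right, Nat.le_zero] at hh; subst hh; simp
  | a::x, b::y, h, hh => by
      rw [lcp_cons] at hh
      by_cases hab : a = b
      · rw [if_pos hab] at hh
        cases h with
        | zero => simp
        | succ n =>
            subst hab
            simp [take_eq_of_le_lcp (Nat.succ_le_succ_iff.mp hh)]
      · rw [if_neg hab, Nat.le_zero] at hh; subst hh; simp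

lemma le_lcp_or_eq_of_take_eq :
    ∀ {h : ℕ} {x y : List α}, x.take h = y.take h → h ≤ lcp x y ∨ x = y := by
  intro h
  induction h with
  | zero => intro x y _; exact Or.inl (Nat.zero_le _)
  | succ n ih =>
      intro x y hxy
      match x, y with
      | [], [] => exact Or.inr rfl
      | [], b::y => simp at hxy
      | a::x, [] => simp at hxy
      | a::x, b::y =>
          simp only [List.take_succ_cons, List.cons.injEq] at hxy
          obtain ⟨hab, htl⟩ := hxy
          subst hab
          rcases ih htl with hle | heq
          · left; rw [lcp_cons, if_pos rfl]; omega
          · right; rw [heq]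

lemma lcp_mono_lex [LinearOrder α] : ∀ (x y z : List α), List.Lex (·<·) x y → List.Lex (·<·) y z →
    lcp x z ≤ lcp y z
  | [], y, z, _, _ => by rw [lcp_nil_left]; exact Nat.zero_le _
  | a::x, y, z, hxy, hyz => by
      cases hxy with
      | cons h1 =>
          cases hyz with
          | cons h2 =>
              rw [lcp_cons, lcp_cons, if_pos rfl, if_pos rfl]
              exact Nat.succ_le_succ (lcp_mono_lex _ _ _ h1 h2)
          | rel h2 =>
              rename_i y' c z'
              rw [lcp_cons]
              rw [if_neg (ne_of_lt h2)]
              exact Nat.zero_le _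
      | rel h1 =>
          rename_i b y'
          cases hyz with
          | cons h2 =>
              rw [lcp_cons, if_neg (ne_of_lt h1)]
              exact Nat.zero_le _
          | rel h2 =>
              rw [lcp_cons, if_neg (ne_of_lt (lt_trans h1 h2))]
              exact Nat.zero_le _

lemma lcp_anti_lex [LinearOrder α] : ∀ (x y z : List α), List.Lex (·<·) x y → List.Lex (·<·) y z →
    lcp x z ≤ lcp x y
  | [], y, z, _, _ => by rw [lcp_nil_left]; exact Nat.zero_le _
  | a::x, y, z, hxy, hyz => by
      cases hxy with
      | cons h1 =>
          cases hyz with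
          | cons h2 =>
              rw [lcp_cons, lcp_cons, if_pos rfl, if_pos rfl]
              exact Nat.succ_le_succ (lcp_anti_lex _ _ _ h1 h2)
          | rel h2 =>
              rw [lcp_cons, if_neg (ne_of_lt h2)]
              exact Nat.zero_le _
      | rel h1 =>
          cases hyz with
          | cons h2 =>
              rw [lcp_cons (b := _), if_neg (ne_of_lt h1)]
              exact Nat.zero_le _
          | rel h2 =>
              rw [lcp_cons, if_neg (ne_of_lt (lt_trans h1 h2))]
              exact Nat.zero_le _


end Aux

/-- if `[ℓ, m]` is an `h`-block then the suffixes `t[sa(ℓ)..], …, t[sa(m)..]`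
all share the same length-`h` (truncated) prefix, and they are exactly the suffixes of `t`
whose length-`h` truncation equals that of `t[sa(ℓ)..]`. -/

theorem h_block_common_prefix {α : Type*} [LinearOrder α] (t : List α)
    (hdist : ∀ i j, i < t.length → j < t.length → i ≠ j → t.drop i ≠ t.drop j)
    (sa : ℕ → ℕ) (hlt : ∀ i < t.length, sa i < t.length)
    (hbij : Set.BijOn sa (Set.Iio t.length) (Set.Iio t.length))
    (hsort : ∀ i j, i < j → j < t.length → t.drop (sa i) < t.drop (sa j))
    (h ℓ m : ℕ) (hblock : IsBlock (LCParr t sa) t.length h ℓ m) :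
    ∀ k < t.length,
      (ℓ ≤ k ∧ k ≤ m) ↔ (t.drop (sa k)).take h = (t.drop (sa ℓ)).take h := by
  obtain ⟨hlm, hmn, hLl, hLm1, hint⟩ := hblock
  have hln : ℓ < t.length := lt_of_le_of_lt hlm hmn
  have hlex : ∀ i j, i < j → j < t.length →
      List.Lex (·<·) (t.drop (sa i)) (t.drop (sa j)) := by
    intro i j hij hjn
    exact hsort i j hij hjn
  -- forward direction by induction
  have chain : ∀ k, k ≤ m → ℓ ≤ k →
      (t.drop (sa k)).take h = (t.drop (sa ℓ)).take h := by
    intro k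
    induction k with
    | zero =>
        intro _ hk0
        have : ℓ = 0 := Nat.le_zero.mp hk0
        rw [this]
    | succ j ih =>
        intro hjm hlj
        rcases eq_or_lt_of_le hlj with heq | hlt'
        · rw [← heq]
        · have hLj : (h : ℤ) ≤ LCParr t sa (j+1) := hint (j+1) hlt' hjm
          have hj1n : j + 1 < t.length := lt_of_le_of_lt hjm hmn
          rw [LCParr] at hLj
          rw [if_neg (by omega)] at hLj
          simp only [Nat.add_sub_cancel] at hLj
          have hh : h ≤ lcp (t.drop (sa j)) (t.drop (sa (j+1))) := by exact_mod_cast hLj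
          have heq2 := take_eq_of_le_lcp hh
          rw [← heq2]
          exact ih (le_trans (Nat.le_succ j) hjm) (Nat.lt_succ_iff.mp hlt')
  intro k hk
  constructor
  · rintro ⟨h1, h2⟩; exact chain k h2 h1
  · intro heq
    rcases le_lcp_or_eq_of_take_eq heq with hle | hEq
    · constructor
      · by_contra hcon
        push_neg at hcon
        -- k < ℓ, so ℓ ≠ 0
        have hl0 : ℓ ≠ 0 := by omega
        have hLlval : (lcp (t.drop (sa (ℓ-1))) (t.drop (sa ℓ)) : ℤ) < h := by
          rw [LCParr, if_neg (by omega)] at hLl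
          exact hLl
        have hlcp : lcp (t.drop (sa (ℓ-1))) (t.drop (sa ℓ)) < h := by exact_mod_cast hLlval
        have hmono : lcp (t.drop (sa k)) (t.drop (sa ℓ)) ≤
            lcp (t.drop (sa (ℓ-1))) (t.drop (sa ℓ)) := by
          rcases eq_or_lt_of_le (Nat.le_sub_one_of_lt hcon) with hkk | hkk
          · rw [hkk]
          · exact lcp_mono_lex _ _ _ (hlex k (ℓ-1) hkk (by omega))
              (hlex (ℓ-1) ℓ (by omega) hln)
        omega
      · by_contra hcon
        push_neg at hcon
        -- m < k, and m+1 < n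
        have hm1n : m + 1 < t.length := by omega
        have hLmval : (lcp (t.drop (sa m)) (t.drop (sa (m+1))) : ℤ) < h := by
          rw [LCParr, if_neg (by omega)] at hLm1
          simpa using hLm1
        have hlcp : lcp (t.drop (sa m)) (t.drop (sa (m+1))) < h := by exact_mod_cast hLmval
        have h1 : lcp (t.drop (sa ℓ)) (t.drop (sa k)) ≤
            lcp (t.drop (sa m)) (t.drop (sa k)) := by
          rcases eq_or_lt_of_le hlm with hkk | hkk
          · rw [hkk]
          · exact lcp_mono_lex _ _ _ (hlex ℓ m hkk hmn) (hlex m k hcon hk)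
        have h2 : lcp (t.drop (sa m)) (t.drop (sa k)) ≤
            lcp (t.drop (sa m)) (t.drop (sa (m+1))) := by
          rcases eq_or_lt_of_le (Nat.succ_le_of_lt hcon) with hkk | hkk
          · subst hkk; exact le_refl _
          · exact lcp_anti_lex _ _ _ (hlex m (m+1) (Nat.lt_succ_self m) hm1n)
              (hlex (m+1) k hkk hk)
        rw [lcp_comm] at hle
        omega
    · -- equal suffixes: k = ℓ
      have hsak : sa k < t.length := hlt k hk
      have hsal : sa ℓ < t.length := hlt ℓ hln
      have : sa k = sa ℓ := by
        by_contra hne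
        exact hdist (sa k) (sa ℓ) hsak hsal hne hEq
      have hkl : k = ℓ := hbij.injOn hk hln this
      exact ⟨le_of_eq hkl.symm, hkl ▸ hlm⟩
end

section
/- Let t0, t1 be strings with distinct unique minimal end-of-string symbols and let SA01 be the suffix array of the concatenation t01 = t0 t1. Suppose an interval [ℓ,m] of positions in SA01 is 'monochrome', i.e., either all of SA01[ℓ],…,SA01[m] are ≤ n0 (suffix starting in t0 region) or all are > n0. If all suffixes in the block come from t0 (start at positions SA01[k] ≤ n0), then their relative order in SA01 agrees with their order in the suffix array of t0 alone: for ℓ ≤ a < b ≤ m, t0[SA01[a], n0] ≺ t0[SA01[b], n0] as suffixes of t0. -/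
/-- If `Lex r u v` and `u` is not a prefix of `v`, then appending anything keeps the Lex order. -/
lemma lex_append_of_not_prefix {α : Type*} {r : α → α → Prop} :
    ∀ {u v : List α}, List.Lex r u v → ¬ u <+: v → ∀ (w w' : List α),
      List.Lex r (u ++ w) (v ++ w')
  | u, v, h, hnp, w, w' => by
    induction h with
    | nil => exact absurd (List.nil_prefix) hnp
    | @cons a l₁ l₂ h ih =>
        exact List.Lex.cons (ih (fun hp => hnp (List.cons_prefix_cons.mpr ⟨rfl, hp⟩)))
    | rel h => exact List.Lex.rel h

lemma no_prefix_of_suffixes {α : Type*} [LinearOrder α] (t0 : List α) (h0 : t0 ≠ [])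
    (hnot : ∀ i (hi : i < t0.length - 1), t0[i]'(by omega) ≠ t0.getLast h0)
    {p q : ℕ} (hp : p < t0.length) (hq : q < t0.length) (hne : p ≠ q) :
    ¬ t0.drop p <+: t0.drop q := by
  intro hpre
  obtain ⟨t, ht⟩ := hpre
  have hlen : t0.length - p + t.length = t0.length - q := by
    have := congrArg List.length ht
    simpa using this
  have hqp : q < p := by
    rcases Nat.lt_or_ge q p with h | h
    · exact h
    · have : t.length = 0 := by omega
      omega
  have hiu : t0.length - p - 1 < (t0.drop p).length := by
    simp [List.length_drop]; omega
  have h1 : (t0.drop q)[t0.length - p - 1]'(by simp [List.length_drop]; omega)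
      = (t0.drop p)[t0.length - p - 1]'hiu := (List.IsPrefix.getElem ⟨t, ht⟩ hiu).symm
  have h2 : (t0.drop p)[t0.length - p - 1]'hiu = t0[p + (t0.length - p - 1)]'(by omega) := by
    simp [List.getElem_drop]
  have h3 : (t0.drop q)[t0.length - p - 1]'(by simp [List.length_drop]; omega)
      = t0[q + (t0.length - p - 1)]'(by omega) := by
    simp [List.getElem_drop]
  have hlast : t0[p + (t0.length - p - 1)]'(by omega) = t0.getLast h0 := by
    rw [List.getLast_eq_getElem]
    congr 1
    omega
  exact hnot (q + (t0.length - p - 1)) (by omega) (by rw [← h3, h1, h2, hlast])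

/-- let `SA01` be the suffix array of `t01 = t0 ++ t1` (0-based). If all
entries of the interval `[ℓ, m]` of `SA01` point into the `t0` region (a monochrome
block), then the relative order of those entries agrees with the lexicographic order
of the corresponding suffixes of `t0` alone. -/
theorem monochrome_block_order {α : Type*} [LinearOrder α] (t0 t1 : List α)
    (hend : DistinctEndMarkers t0 t1)
    (sa01 : ℕ → ℕ)
    (hlt : ∀ i < t0.length + t1.length, sa01 i < t0.length + t1.length)
    (hbij : Set.BijOn sa01 (Set.Iio (t0.length + t1.length)) (Set.Iio (t0.length + t1.length)))
    (hsort : ∀ i j, i < j → j < t0.length + t1.length →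
      (t0 ++ t1).drop (sa01 i) < (t0 ++ t1).drop (sa01 j))
    (ℓ m : ℕ) (hm : m < t0.length + t1.length)
    (hmono : ∀ k, ℓ ≤ k → k ≤ m → sa01 k < t0.length) :
    ∀ a b, ℓ ≤ a → a < b → b ≤ m →
      t0.drop (sa01 a) < t0.drop (sa01 b) := by
  obtain ⟨h0, h1, _, _, hnot0, _, _, _⟩ := hend
  intro a b hla hab hbm
  set p := sa01 a with hpd
  set q := sa01 b with hqd
  have hp : p < t0.length := hmono a hla (by omega)
  have hq : q < t0.length := hmono b (by omega) hbm
  have hpq : p ≠ q := by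
    intro h
    have := hbij.injOn (show a ∈ Set.Iio (t0.length + t1.length) by simp; omega)
      (show b ∈ Set.Iio (t0.length + t1.length) by simp; omega) h
    omega
  have hdp : (t0 ++ t1).drop p = t0.drop p ++ t1 :=
    List.drop_append_of_le_length hp.le
  have hdq : (t0 ++ t1).drop q = t0.drop q ++ t1 :=
    List.drop_append_of_le_length hq.le
  have hs : t0.drop p ++ t1 < t0.drop q ++ t1 := by
    have := hsort a b hab (by omega)
    rwa [hdp, hdq] at this
  rcases lt_trichotomy (t0.drop p) (t0.drop q) with h | h | h
  · exact h
  · exfalso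
    have : t0.length - p = t0.length - q := by
      have := congrArg List.length h
      simpa using this
    omega
  · exfalso
    have hnp : ¬ t0.drop q <+: t0.drop p :=
      no_prefix_of_suffixes t0 h0 hnot0 hq hp (Ne.symm hpq)
    have : t0.drop q ++ t1 < t0.drop p ++ t1 :=
      lex_append_of_not_prefix h hnp t1 t1
    exact absurd hs (asymm this)
end

section
/- Under the same setup, if a monochrome block of SA01 consists entirely of suffixes starting in the t0 region, then for consecutive entries a, a+1 in the block, LCP01[a+1] = LCP0-value between the corresponding consecutive suffixes of t0; i.e., lcp(t01[SA01[a], n0+n1], t01[SA01[a+1], n0+n1]) = lcp(t0[SA01[a], n0], t0[SA01[a+1], n0]). -/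
lemma lcp_append_eq {α : Type*} [DecidableEq α] :
    ∀ (u v s t : List α) (k : ℕ) (hk : k < u.length) (hk' : k < v.length),
      u[k] ≠ v[k] → lcp (u ++ s) (v ++ t) = lcp u v
  | a :: u, b :: v, s, t, k, hk, hk', hne => by
    by_cases hab : a = b
    · cases k with
      | zero => simp only [List.getElem_cons_zero] at hne; exact absurd hab hne
      | succ k =>
        simp only [List.cons_append, lcp, if_pos hab]
        have := lcp_append_eq u v s t k (by simpa using hk) (by simpa using hk')
          (by simpa using hne)
        exact congrArg (· + 1) this
    · simp [lcp, hab]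
  | [], v, _, _, k, hk, _, _ => by simp at hk
  | a :: u, [], _, _, k, _, hk', _ => by simp at hk'

lemma key_lt {α : Type*} [LinearOrder α] (t0 : List α) (h0 : t0 ≠ [])
    (hun : ∀ i (hi : i < t0.length - 1), t0[i]'(by omega) ≠ t0.getLast h0)
    (p q : ℕ) (hp : p < t0.length) (hq : q < t0.length) (hpq : p < q) :
    ∃ k, ∃ (h1 : k < (t0.drop p).length) (h2 : k < (t0.drop q).length),
      (t0.drop p)[k] ≠ (t0.drop q)[k] := by
  have hlen : 0 < t0.length := List.length_pos_iff.mpr h0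
  refine ⟨t0.length - 1 - q, by simp; omega, by simp; omega, ?_⟩
  rw [List.getElem_drop, List.getElem_drop]
  have hqk : q + (t0.length - 1 - q) = t0.length - 1 := by omega
  have h2 : t0[q + (t0.length - 1 - q)]'(by omega) = t0.getLast h0 := by
    rw [List.getLast_eq_getElem]
    congr 1
  rw [h2]
  exact hun (p + (t0.length - 1 - q)) (by omega)

/-- if consecutive entries `a, a+1` of the suffix array `SA01` of
`t01 = t0 ++ t1` lie in a monochrome block of suffixes starting in the `t0` region,
then the LCP of the corresponding suffixes of `t01` equals the LCP of the
corresponding suffixes of `t0` alone. -/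
theorem monochrome_block_lcp {α : Type*} [LinearOrder α] (t0 t1 : List α)
    (hend : DistinctEndMarkers t0 t1)
    (sa01 : ℕ → ℕ)
    (hlt : ∀ i < t0.length + t1.length, sa01 i < t0.length + t1.length)
    (hbij : Set.BijOn sa01 (Set.Iio (t0.length + t1.length)) (Set.Iio (t0.length + t1.length)))
    (hsort : ∀ i j, i < j → j < t0.length + t1.length →
      (t0 ++ t1).drop (sa01 i) < (t0 ++ t1).drop (sa01 j))
    (ℓ m : ℕ) (hm : m < t0.length + t1.length)
    (hmono : ∀ k, ℓ ≤ k → k ≤ m → sa01 k < t0.length) :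
    ∀ a, ℓ ≤ a → a + 1 ≤ m →
      lcp ((t0 ++ t1).drop (sa01 a)) ((t0 ++ t1).drop (sa01 (a + 1)))
        = lcp (t0.drop (sa01 a)) (t0.drop (sa01 (a + 1))) := by
  obtain ⟨h0, h1, _, _, hun, _⟩ := hend
  intro a ha ham
  have hp : sa01 a < t0.length := hmono a ha (by omega)
  have hq : sa01 (a + 1) < t0.length := hmono (a + 1) (by omega) ham
  have hne : sa01 a ≠ sa01 (a + 1) := by
    intro h
    have := hbij.injOn (show a ∈ Set.Iio (t0.length + t1.length) by simp; omega)
      (show a + 1 ∈ Set.Iio (t0.length + t1.length) by simp; omega) h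
    omega
  rw [List.drop_append_of_le_length hp.le, List.drop_append_of_le_length hq.le]
  rcases hne.lt_or_gt with h | h
  · obtain ⟨k, h1, h2, hk⟩ := key_lt t0 h0 hun _ _ hp hq h
    exact lcp_append_eq _ _ _ _ k h1 h2 hk
  · obtain ⟨k, h2, h1, hk⟩ := key_lt t0 h0 hun _ _ hq hp h
    exact lcp_append_eq _ _ _ _ k h1 h2 hk.symm
end

section
/- Let t0, t1 be strings with distinct unique minimal end-of-string symbols $0 < $1 and t01 = t0 t1. For suffix positions p ≤ n0 and q > n0 of t01, writing q' = q - n0, we have: t01[p, n0+n1] ≺ t01[q, n0+n1] if and only if t0[p, n0] ⪯ t1[q', n1] in the comparison where $0 is treated as smaller than $1 and both smaller than every other symbol. In particular the multi-string BWT merge order of suffixes of t0 and t1 coincides with the suffix order in the concatenation t0 t1. -/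
/-!
The end marker `$0` occurs in every suffix `t0[p..]` but nowhere in `t1`, so `t0[p..]` is not a
prefix of (in particular not equal to) the suffix `t1[q'..]`. Two lists neither of which is a
prefix of the other already differ inside the first one, so appending `t1` to `t0[p..]` cannot
change how it compares with `t1[q'..]`, and `≤` between them is the same as `<`.
-/

namespace List

variable {α : Type*}

theorem ne_of_not_prefix {u v : List α} (h : ¬ u <+: v) : u ≠ v :=
  fun e => h (e ▸ prefix_refl u)

theorem getLast_mem_drop {t : List α} (h : t ≠ []) {n : ℕ} (hn : n < t.length) :
    t.getLast h ∈ t.drop n := by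
  have hne : t.drop n ≠ [] := by simpa [drop_eq_nil_iff] using hn
  exact getLast_drop hne ▸ getLast_mem hne

variable [LinearOrder α] {u v w : List α}

theorem append_lt_of_lt_of_not_prefix (h : u < v) (hp : ¬ u <+: v) : u ++ w < v := by
  induction h with
  | nil => exact absurd nil_prefix hp
  | cons _ ih => exact Lex.cons (ih fun h => hp (cons_prefix_cons.2 ⟨rfl, h⟩))
  | rel hab => exact Lex.rel hab

theorem append_lt_iff_of_not_prefix (hp : ¬ u <+: v) : u ++ w < v ↔ u < v := by
  refine ⟨fun h => ?_, fun h => append_lt_of_lt_of_not_prefix h hp⟩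
  by_contra hnot
  have hvu : v < u := (not_lt.1 hnot).lt_of_ne (ne_of_not_prefix hp).symm
  exact lt_asymm h (Lex.append_right _ _ hvu)

end List

theorem concat_suffix_order_general {α : Type*} [LinearOrder α] (t0 t1 : List α)
    (hend : DistinctEndMarkers t0 t1)
    (p q : ℕ) (hp : p < t0.length)
    (hq0 : t0.length ≤ q) :
    (t0 ++ t1).drop p < (t0 ++ t1).drop q ↔ t0.drop p ≤ t1.drop (q - t0.length) := by
  obtain ⟨h0, -, -, -, -, -, hlast, -⟩ := hend
  have hsplit : q = t0.length + (q - t0.length) := by omega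
  rw [List.drop_append_of_le_length hp.le, hsplit, List.drop_length_add_append,
    Nat.add_sub_cancel_left]
  have hnp : ¬ t0.drop p <+: t1.drop (q - t0.length) := fun h =>
    hlast (List.drop_subset _ _ (h.subset (List.getLast_mem_drop h0 hp)))
  rw [List.append_lt_iff_of_not_prefix hnp, (List.ne_of_not_prefix hnp).le_iff_lt]

/-- for a suffix position `p` in the `t0` region and `q` in the `t1`
region of `t01 = t0 ++ t1` (0-based: `p < n0`, `n0 ≤ q < n0 + n1`, `q' = q - n0`),
the suffix of `t01` at `p` is lexicographically smaller than the suffix at `q` iff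
`t0[p, n0] ⪯ t1[q', n1]`. Hence the multi-string BWT merge order of the suffixes of
`t0` and `t1` coincides with the suffix order in the concatenation `t0 ++ t1`. -/
theorem concat_suffix_order {α : Type*} [LinearOrder α] (t0 t1 : List α)
    (hend : DistinctEndMarkers t0 t1)
    (p q : ℕ) (hp : p < t0.length)
    (hq0 : t0.length ≤ q) (hq : q < t0.length + t1.length) :
    (t0 ++ t1).drop p < (t0 ++ t1).drop q ↔ t0.drop p ≤ t1.drop (q - t0.length) :=
  concat_suffix_order_general t0 t1 hend p q hp hq0
end

section
/- Let t have pairwise distinct suffixes and LCP array with sentinels LCP[1] = LCP[n+1] = -1. Then the number of pairs (h, i) with h ≥ 1 and i contained in an h-block of size ≥ 2 is at most Σ_{i=2}^{n} 2·LCP[i] + 2·(n−1). -/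
open scoped Classical

/-- the number of pairs `(h, k)` with `h ≥ 1` and position `k` lying in
an `h`-block of size `≥ 2` is at most `2·Σ_{i=1}^{n-1} LCP[i] + 2·(n-1)` (0-based:
interior LCP indices are `1 ≤ i ≤ n-1`). This holds for every finite range `h ∈ [1, H]`
of phases. This bounds the total work of the Gap algorithm by `O(n · average LCP)`. -/
theorem gap_total_work_bound {α : Type*} [LinearOrder α] (t : List α)
    (hdist : ∀ i j, i < t.length → j < t.length → i ≠ j → t.drop i ≠ t.drop j)
    (sa : ℕ → ℕ) (hlt : ∀ i < t.length, sa i < t.length)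
    (hbij : Set.BijOn sa (Set.Iio t.length) (Set.Iio t.length))
    (hsort : ∀ i j, i < j → j < t.length → t.drop (sa i) < t.drop (sa j)) :
    ∀ H : ℕ,
      ∑ h ∈ Finset.Icc 1 H,
        ((Finset.range t.length).filter (fun k =>
          ∃ ℓ m, IsBlock (LCParr t sa) t.length h ℓ m ∧ ℓ < m ∧ ℓ ≤ k ∧ k ≤ m)).card
      ≤ 2 * (∑ i ∈ Finset.Ico 1 t.length, (LCParr t sa i).toNat) + 2 * (t.length - 1) := by
  intro H
  obtain ⟨n, hn⟩ : ∃ n, n = t.length := ⟨_, rfl⟩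
  obtain ⟨L, hLdef⟩ : ∃ L, L = LCParr t sa := ⟨_, rfl⟩
  rw [← hn, ← hLdef]
  have hL0 : (L 0).toNat = 0 := by simp [hLdef, LCParr]
  have hLn : (L n).toNat = 0 := by simp [hLdef, LCParr, hn]
  -- generic counting bound
  have sumbound : ∀ g : ℕ → ℕ, ∑ h ∈ Finset.Icc 1 H,
      ((Finset.range n).filter (fun k => h ≤ g k)).card ≤ ∑ k ∈ Finset.range n, g k := by
    intro g
    calc ∑ h ∈ Finset.Icc 1 H, ((Finset.range n).filter (fun k => h ≤ g k)).card
        = ∑ h ∈ Finset.Icc 1 H, ∑ k ∈ Finset.range n, if h ≤ g k then 1 else 0 := by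
          simp only [Finset.card_filter]
      _ = ∑ k ∈ Finset.range n, ∑ h ∈ Finset.Icc 1 H, if h ≤ g k then 1 else 0 :=
          Finset.sum_comm
      _ ≤ ∑ k ∈ Finset.range n, g k := by
          apply Finset.sum_le_sum
          intro k _
          calc (∑ h ∈ Finset.Icc 1 H, if h ≤ g k then 1 else 0)
              = ((Finset.Icc 1 H).filter (fun h => h ≤ g k)).card := by
                simp only [Finset.card_filter]
            _ ≤ (Finset.Icc 1 (g k)).card := Finset.card_le_card (by
                intro h hh
                simp only [Finset.mem_filter, Finset.mem_Icc] at *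
                omega)
            _ = g k := by simp
  -- each position in a non-singleton h-block has a big LCP at k or k+1
  have key : ∀ h ∈ Finset.Icc 1 H, ((Finset.range n).filter (fun k =>
          ∃ ℓ m, IsBlock L n h ℓ m ∧ ℓ < m ∧ ℓ ≤ k ∧ k ≤ m)).card
      ≤ ((Finset.range n).filter (fun k => h ≤ (L k).toNat)).card
        + ((Finset.range n).filter (fun k => h ≤ (L (k+1)).toNat)).card := by
    intro h hh
    have h1 : (1:ℕ) ≤ h := (Finset.mem_Icc.mp hh).1
    calc ((Finset.range n).filter (fun k =>
            ∃ ℓ m, IsBlock L n h ℓ m ∧ ℓ < m ∧ ℓ ≤ k ∧ k ≤ m)).card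
        ≤ ((Finset.range n).filter (fun k =>
            h ≤ (L k).toNat ∨ h ≤ (L (k+1)).toNat)).card := by
          apply Finset.card_le_card
          intro k hk
          simp only [Finset.mem_filter] at hk ⊢
          obtain ⟨hkr, ℓ, m, hb, hlm, hlk, hkm⟩ := hk
          refine ⟨hkr, ?_⟩
          rcases eq_or_lt_of_le hlk with heq | hlt'
          · right
            have := hb.2.2.2.2 (k+1) (by omega) (by omega)
            omega
          · left
            have := hb.2.2.2.2 k hlt' hkm
            omega
      _ ≤ _ := by
          rw [Finset.filter_or]
          exact Finset.card_union_le _ _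
  have step1 : ∑ h ∈ Finset.Icc 1 H,
        ((Finset.range n).filter (fun k =>
          ∃ ℓ m, IsBlock L n h ℓ m ∧ ℓ < m ∧ ℓ ≤ k ∧ k ≤ m)).card
      ≤ (∑ k ∈ Finset.range n, (L k).toNat) + ∑ k ∈ Finset.range n, (L (k+1)).toNat := by
    calc _ ≤ ∑ h ∈ Finset.Icc 1 H,
          (((Finset.range n).filter (fun k => h ≤ (L k).toNat)).card
            + ((Finset.range n).filter (fun k => h ≤ (L (k+1)).toNat)).card) :=
          Finset.sum_le_sum key
      _ = (∑ h ∈ Finset.Icc 1 H, ((Finset.range n).filter (fun k => h ≤ (L k).toNat)).card)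
          + ∑ h ∈ Finset.Icc 1 H,
              ((Finset.range n).filter (fun k => h ≤ (L (k+1)).toNat)).card :=
          Finset.sum_add_distrib
      _ ≤ _ := add_le_add (sumbound _) (sumbound (fun j => (L (j+1)).toNat))
  have e1 : ∑ k ∈ Finset.range n, (L k).toNat = ∑ i ∈ Finset.Ico 1 n, (L i).toNat := by
    rcases Nat.eq_zero_or_pos n with h0 | h0
    · simp [h0]
    · rw [Finset.range_eq_Ico, Finset.sum_eq_sum_Ico_succ_bot h0, hL0]
      simp
  have e2 : ∑ k ∈ Finset.range n, (L (k+1)).toNat = ∑ i ∈ Finset.Ico 1 n, (L i).toNat := by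
    rcases Nat.eq_zero_or_pos n with h0 | h0
    · simp [h0]
    · have hre : ∑ k ∈ Finset.range n, (L (k+1)).toNat
          = ∑ i ∈ Finset.Ico 1 (n+1), (L i).toNat := by
        rw [Finset.sum_Ico_eq_sum_range]
        simp [add_comm]
      rw [hre, Finset.sum_Ico_succ_top h0, hLn]
      simp
  calc _ ≤ (∑ k ∈ Finset.range n, (L k).toNat) + ∑ k ∈ Finset.range n, (L (k+1)).toNat :=
        step1
    _ = 2 * ∑ i ∈ Finset.Ico 1 n, (L i).toNat := by rw [e1, e2]; ring
    _ ≤ _ := by omega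
end

section
/- Let t0, t1 end in distinct unique minimal symbols $0 < $1 and let Z denote the merge vector defined by: the i-th 0 precedes the j-th 1 in Z iff t0[sa0[i], n0] ⪯ t1[sa1[j], n1] (full suffix comparison). Then the string obtained by interleaving bwt(t0) and bwt(t1) according to Z (taking the next symbol of bwt(t0) for each 0 and of bwt(t1) for each 1) equals the multi-string BWT of t0 and t1: its k-th symbol is the symbol of t0 or t1 preceding (cyclically within its own string) the k-th lexicographically smallest suffix among all suffixes of t0 and t1. -/
/-- The position (0-based index) of the `i`-th occurrence of bit `b` in `Z`
(`Z.length` if there is no such occurrence). -/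
def nthPos (Z : List Bool) (b : Bool) (i : ℕ) : ℕ :=
  ((List.range Z.length).filter (fun p => Z.getD p (!b) == b)).getD i Z.length

/-- The BWT symbol of `t` at suffix-array position `i`: the symbol of `t` cyclically
preceding the suffix `t[sa(i)..]` (0-based), i.e. `t[sa(i)-1]`, or the last symbol of
`t` when `sa(i) = 0`. -/
def prevSym {α : Type*} [Inhabited α] (t : List α) (sa : ℕ → ℕ) (i : ℕ) : α :=
  t.getD ((sa i + t.length - 1) % t.length) default

/-- Interleave the sequences `f` and `g` according to the binary vector `Z`: position
`k` takes the next unused symbol of `g` if `Z[k]` is `1` and of `f` if `Z[k]` is `0`. -/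
def mergeBy {α : Type*} (Z : List Bool) (f g : ℕ → α) : ℕ → α := fun k =>
  if Z.getD k false then g ((Z.take k).count true) else f ((Z.take k).count false)

/-! Think of `Z` as listing all suffixes of `t0` and `t1`: its `i`-th `0` stands for the `i`-th
smallest suffix of `t0` and its `j`-th `1` for the `j`-th smallest suffix of `t1`. Comparing two
suffixes then amounts to comparing their positions in `Z`: within one string because suffix arrays
are sorted, across the strings by the defining property of `Z`, strictness coming from the distinct
end markers (a suffix of `t0` never equals one of `t1`). So the rank of every suffix is its
position in `Z`, and at that position `mergeBy` picks exactly the symbol preceding that suffix.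
Positions in `Z` are handled through `Nat.nth` and `Nat.count` of the predicate `Z[p]? = some b`. -/

open Finset

theorem Nat.nth_lt_iff_lt_count {p : ℕ → Prop} [DecidablePred p] {n k : ℕ}
    (hn : ∀ hf : (Set.ofPred p).Finite, n < #hf.toFinset) :
    Nat.nth p n < k ↔ n < Nat.count p k :=
  ⟨fun h => Nat.count_nth hn ▸ Nat.count_strict_mono (Nat.nth_mem n hn) h,
    Nat.nth_lt_of_lt_count⟩

theorem List.count_take_eq_nat_count {β : Type*} [DecidableEq β] (l : List β) (b : β)
    (k : ℕ) : (l.take k).count b = Nat.count (fun p => l[p]? = some b) k := by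
  induction k with
  | zero => simp
  | succ k ih =>
    rw [List.take_add_one, List.count_append, ih, Nat.count_succ]
    cases l[k]? <;> simp [List.count_singleton]

theorem List.count_eq_nat_count {β : Type*} [DecidableEq β] (l : List β) (b : β) :
    l.count b = Nat.count (fun p => l[p]? = some b) l.length := by
  rw [← List.count_take_eq_nat_count, List.take_length]

section NthPos

variable {Z : List Bool} {b : Bool} {q k : ℕ}

theorem lt_card_toFinset_of_lt_count (hq : q < Z.count b) :
    ∀ hf : (Set.ofPred fun p : ℕ => Z[p]? = some b).Finite, q < #hf.toFinset := fun hf =>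
  hq.trans_le (Z.count_eq_nat_count b ▸ Nat.count_le_card hf _)

theorem nthPos_eq_nth (hq : q < Z.count b) :
    nthPos Z b q = Nat.nth (fun p => Z[p]? = some b) q := by
  set L := (List.range Z.length).filter (fun p => Z.getD p (!b) == b)
  have hmem : ∀ p, p ∈ L ↔ Z[p]? = some b := by
    intro p
    rcases lt_or_ge p Z.length with h | h <;> simp [L, h]
  have hfin : (Set.ofPred fun p : ℕ => Z[p]? = some b).Finite :=
    L.finite_toSet.subset fun p hp => (hmem p).2 hp
  have hsort : hfin.toFinset.sort = L := by
    have : hfin.toFinset = L.toFinset := by ext p; simp [hmem]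
    rw [this, List.toFinset_sort _ (List.nodup_range.filter _)]
    exact List.pairwise_lt_range.filter _ |>.imp le_of_lt
  have hlen : q < L.length := by
    rw [← hsort, Finset.length_sort]; exact lt_card_toFinset_of_lt_count hq hfin
  rw [nthPos, Nat.nth_eq_getD_sort hfin, hsort, List.getD_eq_getElem _ _ hlen,
    List.getD_eq_getElem _ _ hlen]

theorem nthPos_lt_iff (hq : q < Z.count b) : nthPos Z b q < k ↔ q < (Z.take k).count b := by
  rw [nthPos_eq_nth hq, Nat.nth_lt_iff_lt_count (lt_card_toFinset_of_lt_count hq),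
    List.count_take_eq_nat_count]

theorem getElem?_nthPos (hq : q < Z.count b) : Z[nthPos Z b q]? = some b := by
  rw [nthPos_eq_nth hq]; exact Nat.nth_mem q (lt_card_toFinset_of_lt_count hq)

theorem count_take_nthPos (hq : q < Z.count b) : (Z.take (nthPos Z b q)).count b = q := by
  rw [nthPos_eq_nth hq, List.count_take_eq_nat_count,
    Nat.count_nth (lt_card_toFinset_of_lt_count hq)]

theorem exists_nthPos_eq (hk : k < Z.length) : ∃ b i, i < Z.count b ∧ nthPos Z b i = k := by
  have hbit : Z[k]? = some Z[k] := List.getElem?_eq_getElem hk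
  have hi : (Z.take k).count Z[k] < Z.count Z[k] := by
    rw [List.count_take_eq_nat_count, List.count_eq_nat_count]
    exact Nat.count_strict_mono hbit hk
  refine ⟨Z[k], _, hi, ?_⟩
  rw [nthPos_eq_nth hi, List.count_take_eq_nat_count, Nat.nth_count hbit]

theorem nthPos_lt_nthPos_iff {p : ℕ} (hp : p < Z.count b) (hq : q < Z.count b) :
    nthPos Z b p < nthPos Z b q ↔ p < q := by
  rw [nthPos_lt_iff hp, count_take_nthPos hq]

theorem nthPos_ne_nthPos {c : Bool} {p : ℕ} (hbc : b ≠ c) (hp : p < Z.count b)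
    (hq : q < Z.count c) :
    nthPos Z b p ≠ nthPos Z c q := fun h => by
  have := getElem?_nthPos hq
  rw [← h, getElem?_nthPos hp] at this
  exact hbc (Option.some.inj this)

theorem card_filter_nthPos_lt (k : ℕ) :
    #{q ∈ range (Z.count b) | nthPos Z b q < k} = (Z.take k).count b := by
  rw [← card_range ((Z.take k).count b)]
  congr 1; ext q
  simp only [mem_filter, mem_range]
  constructor
  · rintro ⟨hq, h⟩; exact (nthPos_lt_iff hq).1 h
  · intro h
    have hq := h.trans_le ((List.take_sublist k Z).count_le b)
    exact ⟨hq, (nthPos_lt_iff hq).2 h⟩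

theorem mergeBy_nthPos {β : Type*} (f g : ℕ → β) (hq : q < Z.count b) :
    mergeBy Z f g (nthPos Z b q) = cond b (g q) (f q) := by
  have := getElem?_nthPos hq
  cases b <;> simp [mergeBy, List.getD_eq_getElem?_getD, this, count_take_nthPos hq]

end NthPos

section SuffixOrder

variable {α : Type*} [LinearOrder α]

theorem drop_lt_drop_iff_of_sorted {t : List α} {sa : ℕ → ℕ}
    (hsort : ∀ i j, i < j → j < t.length → t.drop (sa i) < t.drop (sa j)) {p i : ℕ}
    (hp : p < t.length) (hi : i < t.length) : t.drop (sa p) < t.drop (sa i) ↔ p < i :=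
  StrictMonoOn.lt_iff_lt (fun p _ i hi h => hsort p i h hi) hp hi

theorem drop_lt_drop_iff_nthPos_lt_nthPos {t : List α} {sa : ℕ → ℕ}
    (hsort : ∀ i j, i < j → j < t.length → t.drop (sa i) < t.drop (sa j))
    {Z : List Bool} {b : Bool} (hc : Z.count b = t.length) {p i : ℕ}
    (hp : p < t.length) (hi : i < t.length) :
    t.drop (sa p) < t.drop (sa i) ↔ nthPos Z b p < nthPos Z b i := by
  rw [drop_lt_drop_iff_of_sorted hsort hp hi, nthPos_lt_nthPos_iff (hc ▸ hp) (hc ▸ hi)]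

theorem DistinctEndMarkers.drop_ne_drop {t0 t1 : List α} (hend : DistinctEndMarkers t0 t1)
    {s0 s1 : ℕ} (h0 : s0 < t0.length) (h1 : s1 < t1.length) : t0.drop s0 ≠ t1.drop s1 := by
  obtain ⟨hne0, hne1, hlt, -⟩ := hend
  intro heq
  have := congrArg List.getLast? heq
  simp [List.getLast?_drop, h0.not_ge, h1.not_ge, List.getLast?_eq_some_getLast hne0,
    List.getLast?_eq_some_getLast hne1] at this
  exact hlt.ne this

end SuffixOrder

/-- interleaving `bwt(t0)` and `bwt(t1)` according to the merge vector
`Z` (whose `i`-th zero precedes its `j`-th one iff `t0[sa0(i)..] ⪯ t1[sa1(j)..]`)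
yields the multi-string BWT of `t0` and `t1`: for every `k`, the `k`-th symbol of the
interleaving is the symbol preceding (cyclically within its own string) the `k`-th
lexicographically smallest suffix among all the suffixes of `t0` and `t1`, the rank
of a suffix being the number of suffixes of `t0` and `t1` strictly smaller than it. -/
theorem merged_bwt_is_multistring_bwt {α : Type*} [LinearOrder α] [Inhabited α]
    (t0 t1 : List α) (hend : DistinctEndMarkers t0 t1)
    (sa0 : ℕ → ℕ) (hbij0 : Set.BijOn sa0 (Set.Iio t0.length) (Set.Iio t0.length))
    (hsort0 : ∀ i j, i < j → j < t0.length → t0.drop (sa0 i) < t0.drop (sa0 j))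
    (sa1 : ℕ → ℕ) (hbij1 : Set.BijOn sa1 (Set.Iio t1.length) (Set.Iio t1.length))
    (hsort1 : ∀ i j, i < j → j < t1.length → t1.drop (sa1 i) < t1.drop (sa1 j))
    (Z : List Bool) (hc0 : Z.count false = t0.length) (hc1 : Z.count true = t1.length)
    (hZ : ∀ i < t0.length, ∀ j < t1.length,
      (nthPos Z false i < nthPos Z true j ↔ t0.drop (sa0 i) ≤ t1.drop (sa1 j))) :
    ∀ k < t0.length + t1.length,
      (∃ i < t0.length,
        ((Finset.range t0.length).filter
            (fun p => t0.drop (sa0 p) < t0.drop (sa0 i))).card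
          + ((Finset.range t1.length).filter
            (fun q => t1.drop (sa1 q) < t0.drop (sa0 i))).card = k ∧
        mergeBy Z (prevSym t0 sa0) (prevSym t1 sa1) k = prevSym t0 sa0 i) ∨
      (∃ j < t1.length,
        ((Finset.range t0.length).filter
            (fun p => t0.drop (sa0 p) < t1.drop (sa1 j))).card
          + ((Finset.range t1.length).filter
            (fun q => t1.drop (sa1 q) < t1.drop (sa1 j))).card = k ∧
        mergeBy Z (prevSym t0 sa0) (prevSym t1 sa1) k = prevSym t1 sa1 j) := by
  have hlen : Z.length = t0.length + t1.length := by
    rw [← hc0, ← hc1, List.count_false_add_count_true]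
  have h10 : ∀ i < t0.length, ∀ j < t1.length,
      t1.drop (sa1 j) < t0.drop (sa0 i) ↔ nthPos Z true j < nthPos Z false i := by
    intro i hi j hj
    rw [← not_le, ← hZ i hi j hj, not_lt]
    exact (nthPos_ne_nthPos (by decide) (hc1 ▸ hj) (hc0 ▸ hi)).le_iff_lt
  have h01 : ∀ i < t0.length, ∀ j < t1.length,
      t0.drop (sa0 i) < t1.drop (sa1 j) ↔ nthPos Z false i < nthPos Z true j := by
    intro i hi j hj
    rw [hZ i hi j hj]
    exact (hend.drop_ne_drop (hbij0.mapsTo hi) (hbij1.mapsTo hj)).le_iff_lt.symm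
  intro k hk
  obtain ⟨b, i, hi, rfl⟩ := exists_nthPos_eq (hlen ▸ hk)
  have hrank : #{p ∈ range (Z.count false) | nthPos Z false p < nthPos Z b i}
      + #{q ∈ range (Z.count true) | nthPos Z true q < nthPos Z b i} = nthPos Z b i := by
    rw [card_filter_nthPos_lt, card_filter_nthPos_lt, List.count_false_add_count_true,
      List.length_take_of_le (hlen ▸ hk.le)]
  cases b
  · refine .inl ⟨i, hc0 ▸ hi, ?_, mergeBy_nthPos _ _ hi⟩
    rwa [filter_congr fun p hp =>
        drop_lt_drop_iff_nthPos_lt_nthPos hsort0 hc0 (mem_range.1 hp) (hc0 ▸ hi),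
      filter_congr fun q hq => h10 i (hc0 ▸ hi) q (mem_range.1 hq), ← hc0, ← hc1]
  · refine .inr ⟨i, hc1 ▸ hi, ?_, mergeBy_nthPos _ _ hi⟩
    rwa [filter_congr fun p hp => h01 p (mem_range.1 hp) i (hc1 ▸ hi),
      filter_congr fun q hq =>
        drop_lt_drop_iff_nthPos_lt_nthPos hsort1 hc1 (mem_range.1 hq) (hc1 ▸ hi),
      ← hc0, ← hc1]
end
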